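/- If G is a nondegenerate gyrogroup (a gyrogroup possessing a nonidentity gyroautomorphism), then the geometry (G, Γ_m) is transitive but not sharply transitive: for all x, y ∈ G there exists T ∈ Γ_m with T(x) = y, but there exist x, y ∈ G and two distinct transformations T, T' ∈ Γ_m with T(x) = y = T'(x). -/
import Mathlib


/-- A gyrogroup: a set with a binary operation `op`, a left identity `e`, left inverses
`inv`, and gyroautomorphisms `gyr a b` (bijective and operation-preserving) satisfying the
left gyroassociative law and the left loop property. -/
class Gyrogroup (G : Type*) where
  /-- the gyrogroup operation `⊕` -/
  op : G → G → G
  /-- the identity element -/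
  e : G
  /-- the inverse `⊖a` -/
  inv : G → G
  /-- (G1) `e ⊕ a = a` -/
  op_e : ∀ a : G, op e a = a
  /-- (G2) `⊖a ⊕ a = e` -/
  op_inv : ∀ a : G, op (inv a) a = e
  /-- the gyroautomorphism `gyr[a, b]` -/
  gyr : G → G → G → G
  /-- (G3) `gyr[a, b]` is bijective -/
  gyr_bijective : ∀ a b : G, Function.Bijective (gyr a b)
  /-- (G3) `gyr[a, b]` preserves the operation -/
  gyr_op : ∀ a b x y : G, gyr a b (op x y) = op (gyr a b x) (gyr a b y)
  /-- (G3) the left gyroassociative law -/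
  gyrassoc : ∀ a b c : G, op a (op b c) = op (op a b) (gyr a b c)
  /-- (G4) the left loop property -/
  loop : ∀ a b : G, gyr (op a b) b = gyr a b

namespace Gyrogroup

variable {G : Type*} [Gyrogroup G]

theorem key (x z : G) : op (inv x) (op x z) = gyr (inv x) x z := by
  rw [gyrassoc, op_inv, op_e]

theorem L_injective (x : G) : Function.Injective (op x) := by
  intro z₁ z₂ h
  have h1 : gyr (inv x) x z₁ = gyr (inv x) x z₂ := by
    rw [← key, ← key, h]
  exact (gyr_bijective (inv x) x).1 h1

theorem L_surjective (x : G) : Function.Surjective (op x) := by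
  intro w
  obtain ⟨z, hz⟩ := (gyr_bijective (inv x) x).2 (op (inv x) w)
  exact ⟨z, L_injective (inv x) (by rw [key, hz])⟩

theorem L_bijective (x : G) : Function.Bijective (op x) :=
  ⟨L_injective x, L_surjective x⟩

/-- The left gyrotranslation `L_a : x ↦ a ⊕ x` as a permutation of `G`. -/
noncomputable def Lperm (a : G) : Equiv.Perm G := Equiv.ofBijective (op a) (L_bijective a)

/-- The gyroautomorphism `gyr[a, b]` as a permutation of `G`. -/
noncomputable def gyrPerm (a b : G) : Equiv.Perm G := Equiv.ofBijective (gyr a b) (gyr_bijective a b)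

/-- `GYR(G)`: the subgroup of `Sym(G)` generated by all gyroautomorphisms. -/
def GYR (G : Type*) [Gyrogroup G] : Subgroup (Equiv.Perm G) :=
  Subgroup.closure {π : Equiv.Perm G | ∃ a b : G, π = gyrPerm a b}

/-- `Γₘ = {L_a ∘ γ : a ∈ G, γ ∈ GYR(G)}`, a subgroup of `Sym(G)`. -/
def Γm (G : Type*) [Gyrogroup G] : Set (Equiv.Perm G) :=
  {T : Equiv.Perm G | ∃ a : G, ∃ γ ∈ GYR G, T = Lperm a * γ}

end Gyrogroup


namespace GyroAux
open Gyrogroup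
variable {G : Type*} [Gyrogroup G]

theorem gyr_e_left (b c : G) : gyr (e : G) b c = c := by
  apply L_injective b
  rw [← op_e (op b c), gyrassoc, op_e]

theorem gyr_inv_self (x c : G) : gyr (inv x : G) x c = c := by
  rw [← loop (inv x) x, op_inv, gyr_e_left]

theorem cancel_left (x z : G) : op (inv x) (op x z) = z := by
  rw [key, gyr_inv_self]

theorem op_e_right (a : G) : op a (e : G) = a := by
  apply L_injective (inv a)
  rw [cancel_left, op_inv]

theorem gyr_fixes_e (a b : G) : gyr a b (e : G) = e := by
  have h : gyr a b (e : G) = op (gyr a b e) (gyr a b e) := by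
    rw [← gyr_op]; rw [op_e]
  set u := gyr a b (e : G)
  have : op (inv u) u = op (inv u) (op u u) := by rw [← h]
  rw [cancel_left, op_inv] at this
  exact this.symm

theorem lperm_apply (a x : G) : Lperm a x = op a x := rfl
theorem gyrperm_apply (a b x : G) : gyrPerm a b x = gyr a b x := rfl

end GyroAux

open Gyrogroup GyroAux in
/-- If `G` is a nondegenerate gyrogroup (one possessing a nonidentity gyroautomorphism),
then `(G, Γₘ)` is transitive but not sharply transitive. -/
theorem stmt11 {G : Type*} [Gyrogroup G] (hnd : ∃ a b : G, gyr a b ≠ id) :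
    (∀ x y : G, ∃ T ∈ Γm G, T x = y) ∧
      ∃ x y : G, ∃ T ∈ Γm G, ∃ T' ∈ Γm G, T ≠ T' ∧ T x = y ∧ T' x = y := by
  constructor
  · intro x y
    refine ⟨Lperm (op y (inv x)) * gyrPerm y (inv x), ⟨op y (inv x), gyrPerm y (inv x),
      Subgroup.subset_closure ⟨y, inv x, rfl⟩, rfl⟩, ?_⟩
    show Lperm (op y (inv x)) (gyrPerm y (inv x) x) = y
    rw [lperm_apply, gyrperm_apply, ← gyrassoc, op_inv, op_e_right]
  · obtain ⟨a, b, hab⟩ := hnd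
    obtain ⟨c, hc⟩ : ∃ c : G, gyr a b c ≠ c := by
      by_contra h
      push_neg at h
      exact hab (funext h)
    refine ⟨e, e, Lperm e * 1, ⟨e, 1, one_mem _, rfl⟩,
      Lperm e * gyrPerm a b, ⟨e, gyrPerm a b, Subgroup.subset_closure ⟨a, b, rfl⟩, rfl⟩,
      ?_, ?_, ?_⟩
    · intro h
      apply hc
      have := congrArg (fun T => T c) h
      simpa [lperm_apply, gyrperm_apply, op_e] using this.symm
    · show Lperm e ((1 : Equiv.Perm G) e) = e
      simp [lperm_apply, op_e]
    · show Lperm e (gyrPerm a b e) = e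
      rw [lperm_apply, gyrperm_apply, gyr_fixes_e, op_e]
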